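/- arXiv:2502.09161 — 2 statements merged into one kernel-verified Lean document; each statement's English description precedes it below -/
import Mathlib

section
/- For every n ≥ 1, the identity Σ_{T∈𝒫_n} x^{oleaf(T)} y^{yleaf(T)} = Σ_{T∈𝒫_n} x^{elint(T)} y^{elleaf(T)} holds in ℤ[x,y]. -/
/-- Labeled plane trees: a node with a label in `ℕ` and a (left-to-right ordered)
list of children. -/
inductive LTree : Type where
  | node : ℕ → List LTree → LTree

namespace LTree

/-- The label of the root. -/
def label : LTree → ℕ
  | node a _ => a

/-- The list of children of the root, from left to right. -/
def children : LTree → List LTree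
  | node _ cs => cs

/-- A tree consisting of a single node is a leaf. -/
def isLeaf (t : LTree) : Bool := t.children.isEmpty

/-- The list of all subtrees (i.e. all nodes) of a tree. -/
def subtrees : LTree → List LTree
  | node a cs => node a cs :: (cs.attach.map (fun c => subtrees c.1)).flatten
decreasing_by
  simp only [LTree.node.sizeOf_spec]
  have := List.sizeOf_lt_of_mem c.2
  omega

/-- The multiset of labels of all nodes of a tree. -/
def labels (T : LTree) : Multiset ℕ := (T.subtrees.map label : List ℕ)

/-- `T` is a weakly increasing tree on the multiset `M`: the root is labeled `0`,
the multiset of labels is `M ∪ {0}`, labels weakly increase along root-to-leaf paths,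
and the labels of the children of each node weakly increase from right to left. -/
def IsWIT (M : Multiset ℕ) (T : LTree) : Prop :=
  T.label = 0 ∧ T.labels = 0 ::ₘ M ∧
  ∀ t ∈ T.subtrees, (∀ c ∈ t.children, t.label ≤ c.label) ∧
    List.Chain' (fun a b => b ≤ a) (t.children.map label)

/-- `T` is (an encoding of) a plane tree with `n` edges: all labels are zero
and there are `n + 1` nodes. -/
def IsPlane (n : ℕ) (T : LTree) : Prop :=
  (∀ t ∈ T.subtrees, t.label = 0) ∧ T.subtrees.length = n + 1

/-- The number of singleton leaves: leaves that are the only child of their parent. -/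
def sleaf (T : LTree) : ℕ :=
  T.subtrees.countP (fun t => match t.children with
    | [c] => c.isLeaf
    | _ => false)

/-- The number of elder leaves: leaves that are the leftmost child of their parent
and have siblings. -/
def eleaf (T : LTree) : ℕ :=
  T.subtrees.countP (fun t => match t.children with
    | c :: _ :: _ => c.isLeaf
    | _ => false)

/-- The number of young leaves: leaves that are not the leftmost child of their parent. -/
def yleaf (T : LTree) : ℕ :=
  (T.subtrees.map (fun t => t.children.tail.countP isLeaf)).sum

/-- The number of young internal nodes: internal nodes whose leftmost child is internal. -/
def yint (T : LTree) : ℕ :=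
  T.subtrees.countP (fun t => match t.children with
    | c :: _ => !c.isLeaf
    | _ => false)

/-- The number of singleton internal nodes: parents of a singleton leaf. -/
def sint (T : LTree) : ℕ :=
  T.subtrees.countP (fun t => match t.children with
    | [c] => c.isLeaf
    | _ => false)

/-- The number of elder internal nodes: parents of an elder leaf. -/
def eint (T : LTree) : ℕ :=
  T.subtrees.countP (fun t => match t.children with
    | c :: _ :: _ => c.isLeaf
    | _ => false)

/-- The number of old leaves: leaves that are the leftmost child of their parent. -/
def oleaf (T : LTree) : ℕ := sleaf T + eleaf T

/-- The number of old internal nodes. -/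
def oint (T : LTree) : ℕ := sint T + eint T

/-- All subtrees of a tree together with their levels, the root being at level `d`. -/
def subtreesL (d : ℕ) : LTree → List (ℕ × LTree)
  | node a cs => (d, node a cs) :: (cs.attach.map (fun c => subtreesL (d + 1) c.1)).flatten
decreasing_by
  simp only [LTree.node.sizeOf_spec]
  have := List.sizeOf_lt_of_mem c.2
  omega

/-- The number of internal nodes at even levels. -/
def elint (T : LTree) : ℕ :=
  (subtreesL 0 T).countP (fun p => p.1 % 2 == 0 && !p.2.isLeaf)

/-- The number of leaves at even levels. -/
def elleaf (T : LTree) : ℕ :=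
  (subtreesL 0 T).countP (fun p => p.1 % 2 == 0 && p.2.isLeaf)

end LTree

/-!
Cutting a plane tree with `n + 1` edges at the leftmost edge of its root writes it uniquely as
`graft T₁ T₂`, with `T₁` the leftmost subtree and `T₂` the rest, of `a` and `b` edges,
`a + b = n`. Both monomial weights are multiplicative under this decomposition, up to
boundary effects: for `x^oleaf y^yleaf` the rest `T₂` is weighted with all children of its root
young, and for `x^elint y^elleaf` the subtree `T₁` is weighted with the parities of its levels
swapped. The four generating functions so obtained satisfy convolution recurrences which pair
up: the one for the rest weight is the one for the odd-level weight, and the two recurrences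
for the sums of the theorem are mirror images of each other under `(a, b) ↦ (b, a)`. Induction
on `n` then gives the identity.
-/

open Finset

theorem List.countP_add_countP_eq {α : Type*} {p q r : α → Bool}
    (h : ∀ a, (if p a then 1 else 0) + (if q a then 1 else 0) = if r a then 1 else 0) :
    ∀ l : List α, l.countP p + l.countP q = l.countP r
  | [] => rfl
  | a :: l => by
    rw [List.countP_cons, List.countP_cons, List.countP_cons, ← List.countP_add_countP_eq h l]
    have := h a
    omega

theorem Nat.succ_mod_two_beq_zero (k : ℕ) : ((k + 1) % 2 == 0) = (k % 2 == 1) := by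
  rw [Bool.eq_iff_iff, beq_iff_eq, beq_iff_eq]
  omega

theorem Nat.succ_mod_two_beq_one (k : ℕ) : ((k + 1) % 2 == 1) = (k % 2 == 0) := by
  rw [Bool.eq_iff_iff, beq_iff_eq, beq_iff_eq]
  omega

theorem eq_of_recurrences {R : Type*} [CommSemiring R] (x y : R) {A B C D : ℕ → R}
    (hA : ∀ n, A (n + 1) = ∑ p ∈ antidiagonal n, (if p.1 = 0 then x else A p.1) * B p.2)
    (hB : ∀ n, B (n + 1) = ∑ p ∈ antidiagonal n, (if p.1 = 0 then y else A p.1) * B p.2)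
    (hC : ∀ n, C (n + 1) = ∑ p ∈ antidiagonal n, D p.1 * (if p.2 = 0 then x else C p.2))
    (hD : ∀ n, D (n + 1) = ∑ p ∈ antidiagonal n, C p.1 * D p.2)
    (hB₀ : B 0 = D 0) (hC₀ : C 0 = y) (n : ℕ) : B n = D n ∧ (n ≠ 0 → A n = C n) := by
  induction n using Nat.strong_induction_on with
  | _ n ih =>
    cases n with
    | zero => exact ⟨hB₀, fun h => (h rfl).elim⟩
    | succ n =>
      have hBD : ∀ p ∈ antidiagonal n, B p.2 = D p.2 := fun p hp =>
        (ih p.2 (by have := mem_antidiagonal.1 hp; omega)).1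
      have hAC : ∀ p ∈ antidiagonal n, ∀ z : R,
          (if p.1 = 0 then z else A p.1) = if p.1 = 0 then z else C p.1 := fun p hp z => by
        split_ifs with h
        · rfl
        · exact (ih p.1 (by have := mem_antidiagonal.1 hp; omega)).2 h
      refine ⟨?_, fun _ => ?_⟩
      · rw [hB, hD]
        refine sum_congr rfl fun p hp => ?_
        rw [hAC p hp, hBD p hp]
        split_ifs with h
        · rw [h, hC₀]
        · rfl
      · rw [hA, hC]
        conv_rhs => rw [← Nat.sum_antidiagonal_swap]
        refine sum_congr rfl fun p hp => ?_
        rw [Prod.fst_swap, Prod.snd_swap, hAC p hp, hBD p hp, mul_comm]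

namespace LTree

theorem subtrees_node (a : ℕ) (cs : List LTree) :
    subtrees (node a cs) = node a cs :: (cs.map subtrees).flatten := by
  rw [subtrees]
  simp

theorem subtreesL_node (d a : ℕ) (cs : List LTree) :
    subtreesL d (node a cs) = (d, node a cs) :: (cs.map (subtreesL (d + 1))).flatten := by
  rw [subtreesL]
  simp

theorem subtrees_eq_cons_tail (T : LTree) : subtrees T = T :: (subtrees T).tail := by
  cases T
  simp [subtrees_node]

theorem subtreesL_eq_cons_tail (d : ℕ) (T : LTree) :
    subtreesL d T = (d, T) :: (subtreesL d T).tail := by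
  cases T
  simp [subtreesL_node]

theorem self_mem_subtrees (T : LTree) : T ∈ subtrees T := by
  rw [subtrees_eq_cons_tail]
  exact List.mem_cons_self

theorem length_subtrees_pos (T : LTree) : 0 < (subtrees T).length := by
  rw [subtrees_eq_cons_tail]
  exact Nat.succ_pos _

theorem eq_node_nil_of_isLeaf {T : LTree} (h : T.isLeaf) : T = node T.label [] := by
  obtain ⟨a, _ | ⟨c, cs⟩⟩ := T
  · rfl
  · simp [isLeaf, children] at h

theorem subtrees_of_isLeaf {T : LTree} (h : T.isLeaf) : subtrees T = [T] := by
  rw [eq_node_nil_of_isLeaf h, subtrees_node]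
  rfl

theorem subtreesL_of_isLeaf {T : LTree} (h : T.isLeaf) (d : ℕ) : subtreesL d T = [(d, T)] := by
  rw [eq_node_nil_of_isLeaf h, subtreesL_node]
  rfl

theorem subtreesL_succ (d : ℕ) : ∀ T : LTree,
    subtreesL (d + 1) T = (subtreesL d T).map fun p => (p.1 + 1, p.2)
  | node a cs => by
    rw [subtreesL_node, subtreesL_node]
    simp only [List.map_cons, List.map_flatten, List.map_map]
    congr 2
    refine List.map_congr_left fun c hc => ?_
    have := List.sizeOf_lt_of_mem hc
    exact subtreesL_succ (d + 1) c
decreasing_by simp only [LTree.node.sizeOf_spec]; omega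

def graft (T₁ T₂ : LTree) : LTree := node 0 (T₁ :: T₂.children)

theorem isLeaf_graft (T₁ T₂ : LTree) : (graft T₁ T₂).isLeaf = false := rfl

theorem subtrees_graft (T₁ T₂ : LTree) :
    subtrees (graft T₁ T₂) = graft T₁ T₂ :: (subtrees T₁ ++ (subtrees T₂).tail) := by
  obtain ⟨b, cs⟩ := T₂
  simp [graft, children, subtrees_node]

theorem subtreesL_graft (T₁ T₂ : LTree) :
    subtreesL 0 (graft T₁ T₂) =
      (0, graft T₁ T₂) ::
        ((subtreesL 0 T₁).map (fun p => (p.1 + 1, p.2)) ++ (subtreesL 0 T₂).tail) := by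
  obtain ⟨b, cs⟩ := T₂
  simp [graft, children, subtreesL_node, subtreesL_succ]

theorem graft_inj {T₁ T₂ T₁' T₂' : LTree} (h₂ : T₂.label = T₂'.label)
    (h : graft T₁ T₂ = graft T₁' T₂') : T₁ = T₁' ∧ T₂ = T₂' := by
  obtain ⟨a, cs⟩ := T₂
  obtain ⟨b, ds⟩ := T₂'
  simp_all [graft, children, label]


theorem IsPlane.label_eq_zero {n : ℕ} {T : LTree} (h : IsPlane n T) : T.label = 0 :=
  h.1 T (self_mem_subtrees T)

theorem isPlane_zero_iff {T : LTree} : IsPlane 0 T ↔ T = node 0 [] := by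
  constructor
  · rintro ⟨hlabel, hlen⟩
    obtain ⟨a, _ | ⟨c, cs⟩⟩ := T
    · rw [← IsPlane.label_eq_zero ⟨hlabel, hlen⟩]
      rfl
    · have := length_subtrees_pos c
      rw [subtrees_node, List.length_cons, List.map_cons, List.flatten_cons,
        List.length_append] at hlen
      omega
  · rintro rfl
    simp [IsPlane, subtrees_node, label]

theorem isPlane_graft {a b : ℕ} {T₁ T₂ : LTree} (h₁ : IsPlane a T₁) (h₂ : IsPlane b T₂) :
    IsPlane (a + b + 1) (graft T₁ T₂) := by
  refine ⟨fun t ht => ?_, ?_⟩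
  · rw [subtrees_graft, List.mem_cons, List.mem_append] at ht
    rcases ht with rfl | ht | ht
    · rfl
    · exact h₁.1 t ht
    · exact h₂.1 t (List.mem_of_mem_tail ht)
  · rw [subtrees_graft, List.length_cons, List.length_append, List.length_tail, h₁.2, h₂.2]
    omega

theorem IsPlane.exists_graft {n : ℕ} {T : LTree} (h : IsPlane (n + 1) T) :
    ∃ p ∈ antidiagonal n, ∃ T₁ T₂, IsPlane p.1 T₁ ∧ IsPlane p.2 T₂ ∧ graft T₁ T₂ = T := by
  obtain ⟨a, _ | ⟨c, cs⟩⟩ := T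
  · simp [IsPlane, subtrees_node] at h
  have ha : a = 0 := h.label_eq_zero
  subst ha
  have hT : graft c (node 0 cs) = node 0 (c :: cs) := rfl
  rw [← hT] at h ⊢
  obtain ⟨hlabel, hlen⟩ := h
  rw [subtrees_graft, List.length_cons, List.length_append, List.length_tail] at hlen
  have := length_subtrees_pos c
  have := length_subtrees_pos (node 0 cs)
  refine ⟨((subtrees c).length - 1, (subtrees (node 0 cs)).length - 1),
    mem_antidiagonal.2 (by simp only; omega), c, node 0 cs, ⟨?_, by omega⟩, ⟨?_, by omega⟩, rfl⟩
  · exact fun t ht => hlabel t (by rw [subtrees_graft]; simp [ht])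
  · intro t ht
    rw [subtrees_eq_cons_tail, List.mem_cons] at ht
    rcases ht with rfl | ht
    · rfl
    · exact hlabel t (by rw [subtrees_graft]; simp [ht])

open Classical in
noncomputable def planeFinset : ℕ → Finset LTree
  | 0 => {node 0 []}
  | n + 1 => (antidiagonal n).attach.biUnion fun p =>
      (planeFinset p.1.1 ×ˢ planeFinset p.1.2).image fun q => graft q.1 q.2
decreasing_by all_goals have := mem_antidiagonal.1 p.2; omega

theorem mem_planeFinset {n : ℕ} {T : LTree} : T ∈ planeFinset n ↔ IsPlane n T := by
  induction n using Nat.strong_induction_on generalizing T with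
  | _ n ih =>
    cases n with
    | zero => simp [planeFinset, isPlane_zero_iff]
    | succ n =>
      rw [planeFinset]
      simp only [mem_biUnion, mem_attach, true_and, mem_image, mem_product, Subtype.exists,
        Prod.exists]
      constructor
      · rintro ⟨a, b, hab, T₁, T₂, ⟨h₁, h₂⟩, rfl⟩
        obtain rfl : a + b = n := mem_antidiagonal.1 hab
        exact isPlane_graft ((ih a (by omega)).1 h₁) ((ih b (by omega)).1 h₂)
      · intro h
        obtain ⟨⟨a, b⟩, hab, T₁, T₂, h₁, h₂, rfl⟩ := h.exists_graft
        have hab' : a + b = n := mem_antidiagonal.1 hab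
        exact ⟨a, b, hab, T₁, T₂, ⟨(ih a (by omega)).2 h₁, (ih b (by omega)).2 h₂⟩, rfl⟩

theorem sum_planeFinset_succ {M : Type*} [AddCommMonoid M] (φ : LTree → M) (n : ℕ) :
    ∑ T ∈ planeFinset (n + 1), φ T =
      ∑ p ∈ antidiagonal n, ∑ T₁ ∈ planeFinset p.1, ∑ T₂ ∈ planeFinset p.2, φ (graft T₁ T₂) := by
  classical
  rw [planeFinset, sum_biUnion, ← sum_attach (antidiagonal n)]
  · refine sum_congr rfl fun p _ => ?_
    rw [sum_image, sum_product]
    rintro ⟨T₁, T₂⟩ hT ⟨T₁', T₂'⟩ hT' h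
    simp only [coe_product, Set.mem_prod, mem_coe, mem_planeFinset] at hT hT'
    exact Prod.ext_iff.2 (graft_inj (hT.2.label_eq_zero.trans hT'.2.label_eq_zero.symm) h)
  · intro p _ q _ hpq
    refine disjoint_left.2 fun T hp hq => hpq ?_
    simp only [mem_image, mem_product, mem_planeFinset] at hp hq
    obtain ⟨⟨T₁, T₂⟩, ⟨h₁, h₂⟩, rfl⟩ := hp
    obtain ⟨⟨T₁', T₂'⟩, ⟨h₁', h₂'⟩, h⟩ := hq
    obtain ⟨rfl, -⟩ := graft_inj (h₂'.label_eq_zero.trans h₂.label_eq_zero.symm) h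
    have hp := mem_antidiagonal.1 p.2
    have hq := mem_antidiagonal.1 q.2
    have := h₁.2.symm.trans h₁'.2
    exact Subtype.ext (Prod.ext (by omega) (by omega))

theorem sum_planeFinset_succ_of_graft {R : Type*} [CommSemiring R] {φ f g : LTree → R}
    (h : ∀ T₁ T₂, φ (graft T₁ T₂) = f T₁ * g T₂) (n : ℕ) :
    ∑ T ∈ planeFinset (n + 1), φ T =
      ∑ p ∈ antidiagonal n, (∑ T ∈ planeFinset p.1, f T) * ∑ T ∈ planeFinset p.2, g T := by
  simp only [sum_planeFinset_succ, h, sum_mul_sum]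

theorem sum_planeFinset_ite_isLeaf {M : Type*} [AddCommMonoid M] (n : ℕ) (r : M)
    (φ : LTree → M) :
    ∑ T ∈ planeFinset n, (if T.isLeaf then r else φ T) =
      if n = 0 then r else ∑ T ∈ planeFinset n, φ T := by
  split_ifs with hn
  · simp [hn, planeFinset, isLeaf, children]
  · refine sum_congr rfl fun T hT => if_neg fun hleaf => hn ?_
    have := (mem_planeFinset.1 hT).2
    rw [subtrees_of_isLeaf hleaf, List.length_singleton] at this
    omega


def leftmostChildIsLeaf (t : LTree) : Bool :=
  match t.children with
  | c :: _ => c.isLeaf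
  | [] => false

theorem oleaf_eq_countP (T : LTree) : oleaf T = (subtrees T).countP leftmostChildIsLeaf := by
  refine List.countP_add_countP_eq (fun t => ?_) _
  rcases t with ⟨a, _ | ⟨c, _ | ⟨d, cs⟩⟩⟩ <;> simp [children, leftmostChildIsLeaf] <;> congr

theorem leftmostChildIsLeaf_graft (T₁ T₂ : LTree) :
    leftmostChildIsLeaf (graft T₁ T₂) = T₁.isLeaf := rfl

/-- `oleafRest T` and `yleafRest T` count the old and young leaves of `T` once a new leftmost
child is attached to its root (that child itself not counted): the old leaf among the root's
children, if any, becomes young. -/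
def oleafRest (T : LTree) : ℕ := (subtrees T).tail.countP leftmostChildIsLeaf

def yleafRest (T : LTree) : ℕ :=
  T.children.countP isLeaf + ((subtrees T).tail.map fun t => t.children.tail.countP isLeaf).sum

theorem oleaf_graft (T₁ T₂ : LTree) :
    oleaf (graft T₁ T₂) = (if T₁.isLeaf then 1 else 0) + oleaf T₁ + oleafRest T₂ := by
  rw [oleaf_eq_countP, oleaf_eq_countP, oleafRest, subtrees_graft, List.countP_cons,
    List.countP_append, leftmostChildIsLeaf_graft]
  omega

theorem oleafRest_graft (T₁ T₂ : LTree) :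
    oleafRest (graft T₁ T₂) = oleaf T₁ + oleafRest T₂ := by
  rw [oleafRest, oleaf_eq_countP, oleafRest, subtrees_graft, List.tail_cons, List.countP_append]

theorem yleaf_graft (T₁ T₂ : LTree) : yleaf (graft T₁ T₂) = yleaf T₁ + yleafRest T₂ := by
  rw [yleaf, yleaf, yleafRest, subtrees_graft, List.map_cons, List.sum_cons, List.map_append,
    List.sum_append]
  simp only [graft, children, List.tail_cons]
  omega

theorem yleafRest_graft (T₁ T₂ : LTree) :
    yleafRest (graft T₁ T₂) = (if T₁.isLeaf then 1 else 0) + yleaf T₁ + yleafRest T₂ := by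
  rw [yleafRest, yleaf, yleafRest, subtrees_graft, List.tail_cons, List.map_append,
    List.sum_append]
  simp only [graft, children, List.countP_cons]
  omega

def oddint (T : LTree) : ℕ :=
  (subtreesL 0 T).countP (fun p => p.1 % 2 == 1 && !p.2.isLeaf)

def oddleaf (T : LTree) : ℕ :=
  (subtreesL 0 T).countP (fun p => p.1 % 2 == 1 && p.2.isLeaf)

theorem countP_subtreesL_graft (q : ℕ × LTree → Bool) (T₁ T₂ : LTree) :
    (subtreesL 0 (graft T₁ T₂)).countP q + (if q (0, T₂) then 1 else 0) =
      (if q (0, graft T₁ T₂) then 1 else 0) +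
        (subtreesL 0 T₁).countP (fun p => q (p.1 + 1, p.2)) + (subtreesL 0 T₂).countP q := by
  rw [subtreesL_graft, subtreesL_eq_cons_tail 0 T₂, List.countP_cons, List.countP_cons,
    List.countP_append, List.countP_map, List.tail_cons]
  simp only [Function.comp_def]
  omega

theorem elint_graft (T₁ T₂ : LTree) :
    elint (graft T₁ T₂) = oddint T₁ + elint T₂ + (if T₂.isLeaf then 1 else 0) := by
  have h := countP_subtreesL_graft (fun p => p.1 % 2 == 0 && !p.2.isLeaf) T₁ T₂
  simp only [Nat.succ_mod_two_beq_zero, isLeaf_graft] at h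
  rw [elint, elint, oddint]
  rcases hleaf : T₂.isLeaf <;> simp [hleaf] at h ⊢ <;> omega

theorem elleaf_graft (T₁ T₂ : LTree) :
    elleaf (graft T₁ T₂) + (if T₂.isLeaf then 1 else 0) = oddleaf T₁ + elleaf T₂ := by
  have h := countP_subtreesL_graft (fun p => p.1 % 2 == 0 && p.2.isLeaf) T₁ T₂
  simp only [Nat.succ_mod_two_beq_zero, isLeaf_graft] at h
  rw [elleaf, elleaf, oddleaf]
  simpa using h

theorem oddint_graft (T₁ T₂ : LTree) : oddint (graft T₁ T₂) = elint T₁ + oddint T₂ := by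
  have h := countP_subtreesL_graft (fun p => p.1 % 2 == 1 && !p.2.isLeaf) T₁ T₂
  simp only [Nat.succ_mod_two_beq_one] at h
  rw [oddint, oddint, elint]
  simpa using h

theorem oddleaf_graft (T₁ T₂ : LTree) : oddleaf (graft T₁ T₂) = elleaf T₁ + oddleaf T₂ := by
  have h := countP_subtreesL_graft (fun p => p.1 % 2 == 1 && p.2.isLeaf) T₁ T₂
  simp only [Nat.succ_mod_two_beq_one] at h
  rw [oddleaf, oddleaf, elleaf]
  simpa using h


theorem oleaf_of_isLeaf {T : LTree} (h : T.isLeaf) : oleaf T = 0 := by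
  rw [oleaf_eq_countP, subtrees_of_isLeaf h, eq_node_nil_of_isLeaf h]
  rfl

theorem yleaf_of_isLeaf {T : LTree} (h : T.isLeaf) : yleaf T = 0 := by
  rw [yleaf, subtrees_of_isLeaf h, eq_node_nil_of_isLeaf h]
  rfl

theorem elint_of_isLeaf {T : LTree} (h : T.isLeaf) : elint T = 0 := by
  simp [elint, subtreesL_of_isLeaf h, h]

theorem elleaf_of_isLeaf {T : LTree} (h : T.isLeaf) : elleaf T = 1 := by
  simp [elleaf, subtreesL_of_isLeaf h, h]

section Weights

variable {R : Type*} [CommSemiring R] (x y : R)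

def oyWeight (T : LTree) : R := x ^ oleaf T * y ^ yleaf T

def oyWeightRest (T : LTree) : R := x ^ oleafRest T * y ^ yleafRest T

def evenWeight (T : LTree) : R := x ^ elint T * y ^ elleaf T

def oddWeight (T : LTree) : R := x ^ oddint T * y ^ oddleaf T

theorem oyWeightRest_of_isLeaf {T : LTree} (h : T.isLeaf) : oyWeightRest x y T = 1 := by
  rw [oyWeightRest, oleafRest, yleafRest, subtrees_of_isLeaf h, eq_node_nil_of_isLeaf h]
  simp [children]

theorem evenWeight_of_isLeaf {T : LTree} (h : T.isLeaf) : evenWeight x y T = y := by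
  rw [evenWeight, elint_of_isLeaf h, elleaf_of_isLeaf h, pow_zero, one_mul, pow_one]

theorem oddWeight_of_isLeaf {T : LTree} (h : T.isLeaf) : oddWeight x y T = 1 := by
  simp [oddWeight, oddint, oddleaf, subtreesL_of_isLeaf h]

theorem oyWeight_graft (T₁ T₂ : LTree) :
    oyWeight x y (graft T₁ T₂) =
      (if T₁.isLeaf then x else oyWeight x y T₁) * oyWeightRest x y T₂ := by
  rw [oyWeight, oyWeightRest, oleaf_graft, yleaf_graft]
  split_ifs with h
  · simp only [oleaf_of_isLeaf h, yleaf_of_isLeaf h]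
    ring
  · rw [oyWeight]
    ring

theorem oyWeightRest_graft (T₁ T₂ : LTree) :
    oyWeightRest x y (graft T₁ T₂) =
      (if T₁.isLeaf then y else oyWeight x y T₁) * oyWeightRest x y T₂ := by
  rw [oyWeightRest, oyWeightRest, oleafRest_graft, yleafRest_graft]
  split_ifs with h
  · simp only [oleaf_of_isLeaf h, yleaf_of_isLeaf h]
    ring
  · rw [oyWeight]
    ring

theorem evenWeight_graft (T₁ T₂ : LTree) :
    evenWeight x y (graft T₁ T₂) =
      oddWeight x y T₁ * (if T₂.isLeaf then x else evenWeight x y T₂) := by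
  have h := elleaf_graft T₁ T₂
  rw [evenWeight, oddWeight, elint_graft]
  split_ifs at h ⊢ with hleaf
  · rw [elleaf_of_isLeaf hleaf] at h
    rw [elint_of_isLeaf hleaf, show elleaf (graft T₁ T₂) = oddleaf T₁ by omega]
    ring
  · rw [evenWeight, show elleaf (graft T₁ T₂) = oddleaf T₁ + elleaf T₂ by omega]
    ring

theorem oddWeight_graft (T₁ T₂ : LTree) :
    oddWeight x y (graft T₁ T₂) = evenWeight x y T₁ * oddWeight x y T₂ := by
  rw [oddWeight, oddWeight, evenWeight, oddint_graft, oddleaf_graft]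
  ring

theorem sum_oyWeight_eq_sum_evenWeight {n : ℕ} (hn : n ≠ 0) :
    ∑ T ∈ planeFinset n, oyWeight x y T = ∑ T ∈ planeFinset n, evenWeight x y T := by
  refine (eq_of_recurrences x y (A := fun n => ∑ T ∈ planeFinset n, oyWeight x y T)
    (B := fun n => ∑ T ∈ planeFinset n, oyWeightRest x y T)
    (C := fun n => ∑ T ∈ planeFinset n, evenWeight x y T)
    (D := fun n => ∑ T ∈ planeFinset n, oddWeight x y T)
    (fun n => ?_) (fun n => ?_) (fun n => ?_) (fun n => ?_) ?_ ?_ n).2 hn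
  · simp only [sum_planeFinset_succ_of_graft (oyWeight_graft x y), sum_planeFinset_ite_isLeaf]
  · simp only [sum_planeFinset_succ_of_graft (oyWeightRest_graft x y),
      sum_planeFinset_ite_isLeaf]
  · simp only [sum_planeFinset_succ_of_graft (evenWeight_graft x y), sum_planeFinset_ite_isLeaf]
  · rw [sum_planeFinset_succ_of_graft (oddWeight_graft x y)]
  · simp only [planeFinset, sum_singleton]
    rw [oyWeightRest_of_isLeaf x y rfl, oddWeight_of_isLeaf x y rfl]
  · simp only [planeFinset, sum_singleton]
    exact evenWeight_of_isLeaf x y rfl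

end Weights

end LTree

open MvPolynomial in
/-- **Theorem (new interpretation of the refined Narayana polynomials).**  For `n ≥ 1`,
`Σ_{T ∈ 𝒫_n} x^{oleaf(T)} y^{yleaf(T)} = Σ_{T ∈ 𝒫_n} x^{elint(T)} y^{elleaf(T)}`.
Here `x = X 0`, `y = X 1` in `ℤ[x,y]`. -/
theorem oleaf_yleaf_eq_elint_elleaf
    (n : ℕ) (hn : 1 ≤ n)
    (Pn : Finset LTree) (hPn : ∀ T, T ∈ Pn ↔ LTree.IsPlane n T) :
    ∑ T ∈ Pn, (X 0 : MvPolynomial (Fin 2) ℤ) ^ LTree.oleaf T * X 1 ^ LTree.yleaf T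
      = ∑ T ∈ Pn, (X 0 : MvPolynomial (Fin 2) ℤ) ^ LTree.elint T * X 1 ^ LTree.elleaf T := by
  obtain rfl : Pn = LTree.planeFinset n :=
    Finset.ext fun T => (hPn T).trans LTree.mem_planeFinset.symm
  exact LTree.sum_oyWeight_eq_sum_evenWeight _ _ (by omega)
end

section
/- For n ≥ 1 let A_n = Σ_{π∈S_n} x^{dd(π)} y^{da(π)} z_1^{pk_1(π)} z_2^{pk_2(π)} ∈ ℚ[x,y,z_1,z_2], and let A(t) = Σ_{n≥1} A_n t^n/n!, a formal power series in t with coefficients in ℚ[x,y,z_1,z_2]. Then the formal derivative of A with respect to t satisfies the Riccati equation A′ = A² + ((z_2 − z_1)t + x + y)·A + (z_2 − z_1)·y·t + z_1. -/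
namespace PermWord

/-- The word of a permutation `π` of `[n]`, with the boundary convention
`π₀ = π_{n+1} = 0`: `wordOf n π i = π_i` for `1 ≤ i ≤ n` and `0` otherwise. -/
def wordOf (n : ℕ) (π : Equiv.Perm (Fin n)) (i : ℕ) : ℕ :=
  if h : 1 ≤ i ∧ i ≤ n then ((π ⟨i - 1, by omega⟩ : Fin n) : ℕ) + 1 else 0

/-- `i` is a peak of `π`: `π_{i-1} < π_i > π_{i+1}`. -/
def IsPeak (n : ℕ) (π : Equiv.Perm (Fin n)) (i : ℕ) : Prop :=
  wordOf n π (i - 1) < wordOf n π i ∧ wordOf n π (i + 1) < wordOf n π i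

instance (n : ℕ) (π : Equiv.Perm (Fin n)) (i : ℕ) : Decidable (IsPeak n π i) := by
  unfold IsPeak; infer_instance

/-- `i` is a peak of type 1 of `π`: a peak with `π_{i-1} ≤ π_{i+1}`. -/
def IsPeak1 (n : ℕ) (π : Equiv.Perm (Fin n)) (i : ℕ) : Prop :=
  IsPeak n π i ∧ wordOf n π (i - 1) ≤ wordOf n π (i + 1)

instance (n : ℕ) (π : Equiv.Perm (Fin n)) (i : ℕ) : Decidable (IsPeak1 n π i) := by
  unfold IsPeak1; infer_instance

/-- `i` is a peak of type 2 of `π`: a peak with `π_{i-1} > π_{i+1}`. -/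
def IsPeak2 (n : ℕ) (π : Equiv.Perm (Fin n)) (i : ℕ) : Prop :=
  IsPeak n π i ∧ wordOf n π (i + 1) < wordOf n π (i - 1)

instance (n : ℕ) (π : Equiv.Perm (Fin n)) (i : ℕ) : Decidable (IsPeak2 n π i) := by
  unfold IsPeak2; infer_instance

/-- `i` is a double descent of `π`: `π_{i-1} > π_i > π_{i+1}`. -/
def IsDD (n : ℕ) (π : Equiv.Perm (Fin n)) (i : ℕ) : Prop :=
  wordOf n π i < wordOf n π (i - 1) ∧ wordOf n π (i + 1) < wordOf n π i

instance (n : ℕ) (π : Equiv.Perm (Fin n)) (i : ℕ) : Decidable (IsDD n π i) := by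
  unfold IsDD; infer_instance

/-- `i` is a double ascent of `π`: `π_{i-1} < π_i < π_{i+1}`. -/
def IsDA (n : ℕ) (π : Equiv.Perm (Fin n)) (i : ℕ) : Prop :=
  wordOf n π (i - 1) < wordOf n π i ∧ wordOf n π i < wordOf n π (i + 1)

instance (n : ℕ) (π : Equiv.Perm (Fin n)) (i : ℕ) : Decidable (IsDA n π i) := by
  unfold IsDA; infer_instance

/-- The number of peaks of `π`. -/
def pk (n : ℕ) (π : Equiv.Perm (Fin n)) : ℕ :=
  ((Finset.Icc 1 n).filter (IsPeak n π)).card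

/-- The number of type-1 peaks of `π`. -/
def pk1 (n : ℕ) (π : Equiv.Perm (Fin n)) : ℕ :=
  ((Finset.Icc 1 n).filter (IsPeak1 n π)).card

/-- The number of type-2 peaks of `π`. -/
def pk2 (n : ℕ) (π : Equiv.Perm (Fin n)) : ℕ :=
  ((Finset.Icc 1 n).filter (IsPeak2 n π)).card

/-- The number of double descents of `π`. -/
def dd (n : ℕ) (π : Equiv.Perm (Fin n)) : ℕ :=
  ((Finset.Icc 1 n).filter (IsDD n π)).card

/-- The number of double ascents of `π`. -/
def da (n : ℕ) (π : Equiv.Perm (Fin n)) : ℕ :=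
  ((Finset.Icc 1 n).filter (IsDA n π)).card

end PermWord

/-- The refined Eulerian polynomial
`A_n = Σ_{π ∈ S_n} x^{dd(π)} y^{da(π)} z₁^{pk₁(π)} z₂^{pk₂(π)}` in `ℚ[x,y,z₁,z₂]`.
Here `x = X 0`, `y = X 1`, `z₁ = X 2`, `z₂ = X 3`. -/
noncomputable def Apoly (n : ℕ) : MvPolynomial (Fin 4) ℚ :=
  ∑ π : Equiv.Perm (Fin n),
    MvPolynomial.X 0 ^ PermWord.dd n π * MvPolynomial.X 1 ^ PermWord.da n π *
      MvPolynomial.X 2 ^ PermWord.pk1 n π * MvPolynomial.X 3 ^ PermWord.pk2 n π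

/-- The exponential generating function `A(t) = Σ_{n ≥ 1} A_n tⁿ/n!`. -/
noncomputable def Aser : PowerSeries (MvPolynomial (Fin 4) ℚ) :=
  PowerSeries.mk fun n => if n = 0 then 0 else ((n.factorial : ℚ)⁻¹) • Apoly n

/-!
Inserting the new maximum `n + 1` into one of the `n + 1` gaps of a permutation of `[n]` creates a
peak and changes the type of exactly one old letter: the one after the gap if it is an ascent, the
one before it if it is a descent. Summed over the gaps, the weight `x^dd y^da z₁^pk₁ z₂^pk₂`
therefore transforms by the derivation `D` with `x ↦ z₂`, `y ↦ z₁`, `z₁, z₂ ↦ x z₁ + y z₂`, so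
`A_{n+1} = D A_n` for `n ≥ 1` and `A_1 = z₁`, i.e. `A' = D A + z₁` with `D` acting on coefficients.
For the right-hand side `F` of the Riccati equation one checks `D F = F'`, hence `E = A' - F`
satisfies `E' = D E` and `E(0) = 0`, which forces `E = 0`.
-/

theorem pow_card_filter_eq_prod {ι M : Type*} [CommMonoid M] (s : Finset ι) (p : ι → Prop)
    [DecidablePred p] (x : M) : x ^ (s.filter p).card = ∏ i ∈ s, if p i then x else 1 := by
  rw [Finset.prod_ite, Finset.prod_const, Finset.prod_const_one, mul_one]

theorem prod_Icc_one_eq_prod_fin {M : Type*} [CommMonoid M] (f : ℕ → M) (n : ℕ) :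
    ∏ i ∈ Finset.Icc 1 n, f i = ∏ k : Fin n, f (k + 1) := by
  rw [Fin.prod_univ_eq_prod_range (fun k => f (k + 1)), Finset.range_eq_Ico, Finset.prod_Ico_add']
  rfl

namespace Derivation

section

variable {R A M : Type*} [CommSemiring R] [CommSemiring A] [Algebra R A]
  [AddCommMonoid M] [Module A M] [Module R M]

theorem leibniz_prod {ι : Type*} [DecidableEq ι] (D : Derivation R A M) (s : Finset ι)
    (f : ι → A) : D (∏ i ∈ s, f i) = ∑ i ∈ s, (∏ j ∈ s.erase i, f j) • D (f i) := by
  induction s using Finset.induction_on with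
  | empty => simp
  | insert a s ha ih =>
    rw [Finset.prod_insert ha, leibniz, ih, Finset.sum_insert ha, Finset.erase_insert ha,
      Finset.smul_sum, add_comm]
    congr 1
    refine Finset.sum_congr rfl fun i hi => ?_
    rw [Finset.erase_insert_of_ne (ne_of_mem_of_not_mem hi ha).symm, Finset.prod_insert
      (fun h => ha (Finset.mem_of_mem_erase h)), mul_smul]

end

section

open PowerSeries

variable {R A : Type*} [CommSemiring R] [CommRing A] [Algebra R A]

noncomputable def mapPowerSeries (D : Derivation R A A) : Derivation R A⟦X⟧ A⟦X⟧ :=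
  Derivation.mk'
    { toFun := fun f => PowerSeries.mk fun n => D (coeff n f)
      map_add' := fun f g => by ext; simp
      map_smul' := fun r f => by ext; simp }
    fun f g => by
      ext n
      simp only [LinearMap.coe_mk, AddHom.coe_mk, coeff_mk, smul_eq_mul, map_add,
        coeff_mul, map_sum, leibniz, Finset.sum_add_distrib]
      exact congrArg _
        (Finset.Nat.sum_antidiagonal_swap (f := fun p => coeff p.1 g * D (coeff p.2 f)))

@[simp]
theorem coeff_mapPowerSeries (D : Derivation R A A) (f : A⟦X⟧) (n : ℕ) :
    coeff n (D.mapPowerSeries f) = D (coeff n f) := by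
  simp [mapPowerSeries]

@[simp]
theorem constantCoeff_mapPowerSeries (D : Derivation R A A) (f : A⟦X⟧) :
    constantCoeff (D.mapPowerSeries f) = D (constantCoeff f) := by
  rw [← coeff_zero_eq_constantCoeff_apply, ← coeff_zero_eq_constantCoeff_apply,
    coeff_mapPowerSeries]

@[simp]
theorem mapPowerSeries_C (D : Derivation R A A) (a : A) : D.mapPowerSeries (C a) = C (D a) := by
  ext n
  simp only [coeff_mapPowerSeries, coeff_C]
  split_ifs <;> simp

@[simp]
theorem mapPowerSeries_X (D : Derivation R A A) : D.mapPowerSeries X = 0 := by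
  ext n
  simp only [coeff_mapPowerSeries, coeff_X, map_zero]
  split_ifs <;> simp

theorem mapPowerSeries_derivative (D : Derivation R A A) (f : A⟦X⟧) :
    D.mapPowerSeries (d⁄dX A f) = d⁄dX A (D.mapPowerSeries f) := by
  ext n
  simp only [coeff_mapPowerSeries, coeff_derivative, leibniz, smul_eq_mul]
  rw [← Nat.cast_succ, map_natCast, mul_zero, zero_add, mul_comm]

theorem eq_zero_of_derivative_eq_mapPowerSeries [IsAddTorsionFree A] (D : Derivation R A A)
    {f : A⟦X⟧} (hf : d⁄dX A f = D.mapPowerSeries f) (h0 : constantCoeff f = 0) : f = 0 := by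
  ext n
  induction n with
  | zero => simpa using h0
  | succ n ih =>
    have h := congrArg (coeff n) hf
    rw [coeff_derivative, coeff_mapPowerSeries, ih, map_zero, map_zero, ← Nat.cast_succ,
      mul_comm, ← nsmul_eq_mul] at h
    rw [map_zero]
    exact (smul_eq_zero.mp h).resolve_left n.succ_ne_zero

end

end Derivation

namespace PermWord

open MvPolynomial Finset

variable {n : ℕ}

theorem wordOf_zero (π : Equiv.Perm (Fin n)) : wordOf n π 0 = 0 := by
  simp [wordOf]

theorem wordOf_of_lt (π : Equiv.Perm (Fin n)) {i : ℕ} (h : n < i) : wordOf n π i = 0 := by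
  rw [wordOf, dif_neg (by omega)]

theorem wordOf_le (π : Equiv.Perm (Fin n)) (i : ℕ) : wordOf n π i ≤ n := by
  unfold wordOf
  split_ifs
  · exact Fin.is_lt _
  · exact Nat.zero_le n

theorem wordOf_ne_wordOf_succ (hn : 0 < n) (π : Equiv.Perm (Fin n)) {i : ℕ} (hi : i ≤ n) :
    wordOf n π i ≠ wordOf n π (i + 1) := by
  unfold wordOf
  split_ifs
  · intro heq
    have : i - 1 = i + 1 - 1 := congrArg Fin.val (π.injective (Fin.ext (Nat.add_right_cancel heq)))
    omega
  all_goals omega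

noncomputable def letterWeight (a b c : ℕ) : MvPolynomial (Fin 4) ℚ :=
  (if b < a ∧ c < b then X 0 else 1) * (if a < b ∧ b < c then X 1 else 1) *
    (if (a < b ∧ c < b) ∧ a ≤ c then X 2 else 1) * (if (a < b ∧ c < b) ∧ c < a then X 3 else 1)

theorem letterWeight_peak {a b c : ℕ} (hab : a < b) (hcb : c < b) :
    letterWeight a b c = if a ≤ c then X 2 else X 3 := by
  split_ifs with h <;> simp [letterWeight, hab, hcb, hab.not_gt, hcb.not_gt, h]

theorem letterWeight_doubleAscent {a b c : ℕ} (hab : a < b) (hbc : b < c) :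
    letterWeight a b c = X 1 := by
  simp [letterWeight, hab, hbc, hab.not_gt, hbc.not_gt]

theorem letterWeight_doubleDescent {a b c : ℕ} (hba : b < a) (hcb : c < b) :
    letterWeight a b c = X 0 := by
  simp [letterWeight, hba, hcb, hba.not_gt, hcb.not_gt]

theorem letterWeight_valley {a b c : ℕ} (hba : b < a) (hbc : b < c) :
    letterWeight a b c = 1 := by
  simp [letterWeight, hba, hbc, hba.not_gt, hbc.not_gt]

theorem letterWeight_congr_left {a a' b c : ℕ} (ha : b < a) (ha' : b < a') :
    letterWeight a b c = letterWeight a' b c := by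
  simp [letterWeight, ha, ha', ha.not_gt, ha'.not_gt]

theorem letterWeight_congr_right {a b c c' : ℕ} (hc : b < c) (hc' : b < c') :
    letterWeight a b c = letterWeight a b c' := by
  simp [letterWeight, hc, hc', hc.not_gt, hc'.not_gt]

noncomputable def insertionDerivation :
    Derivation ℚ (MvPolynomial (Fin 4) ℚ) (MvPolynomial (Fin 4) ℚ) :=
  mkDerivation ℚ ![X 3, X 2, X 0 * X 2 + X 1 * X 3, X 0 * X 2 + X 1 * X 3]

@[simp]
theorem insertionDerivation_X (i : Fin 4) :
    insertionDerivation (X i) = ![X 3, X 2, X 0 * X 2 + X 1 * X 3, X 0 * X 2 + X 1 * X 3] i :=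
  mkDerivation_X _ _ _

theorem insertionDerivation_letterWeight {a b c N : ℕ} (hab : a ≠ b) (hcb : c ≠ b)
    (hb : b < N) :
    insertionDerivation (letterWeight a b c) =
      (if a < b then X 2 * letterWeight N b c else 0) +
        (if c < b then letterWeight a b N * X 3 else 0) := by
  rcases hab.lt_or_gt with hab | hba <;> rcases hcb.lt_or_gt with hcb | hbc
  · rw [letterWeight_peak hab hcb, letterWeight_doubleDescent hb hcb,
      letterWeight_doubleAscent hab hb]
    split_ifs <;> simp only [insertionDerivation_X, Matrix.cons_val] <;> ring
  · rw [letterWeight_doubleAscent hab hbc, letterWeight_valley hb hbc]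
    simp [hab, hbc.not_gt]
  · rw [letterWeight_doubleDescent hba hcb, letterWeight_valley hba hb]
    simp [hcb, hba.not_gt]
  · rw [letterWeight_valley hba hbc]
    simp [hba.not_gt, hbc.not_gt]

noncomputable def statMonomial (n : ℕ) (π : Equiv.Perm (Fin n)) : MvPolynomial (Fin 4) ℚ :=
  X 0 ^ dd n π * X 1 ^ da n π * X 2 ^ pk1 n π * X 3 ^ pk2 n π

theorem statMonomial_eq_prod (π : Equiv.Perm (Fin n)) :
    statMonomial n π = ∏ k : Fin n,
      letterWeight (wordOf n π k) (wordOf n π (k + 1)) (wordOf n π (k + 2)) := by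
  simp only [statMonomial, dd, da, pk1, pk2, pow_card_filter_eq_prod, ← prod_mul_distrib,
    prod_Icc_one_eq_prod_fin, letterWeight, IsDD, IsDA, IsPeak1, IsPeak2, IsPeak,
    Nat.add_sub_cancel]

theorem wordOf_val_add_one (π : Equiv.Perm (Fin n)) (k : Fin n) :
    wordOf n π (k + 1) = π k + 1 := by
  simp [wordOf]

/-- The word of `insertMax ρ j` is that of `ρ` with the new maximum `n + 1` inserted as its
`j`-th letter (counting from `0`). -/
def insertMax (ρ : Equiv.Perm (Fin n)) (j : Fin (n + 1)) : Equiv.Perm (Fin (n + 1)) :=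
  (finSuccEquiv' j).trans (ρ.optionCongr.trans finSuccEquivLast.symm)

theorem insertMax_apply_self (ρ : Equiv.Perm (Fin n)) (j : Fin (n + 1)) :
    insertMax ρ j j = Fin.last n := by
  simp [insertMax]

theorem insertMax_apply_succAbove (ρ : Equiv.Perm (Fin n)) (j : Fin (n + 1)) (k : Fin n) :
    insertMax ρ j (j.succAbove k) = (ρ k).castSucc := by
  simp [insertMax]

theorem insertMax_bijective :
    Function.Bijective fun p : Equiv.Perm (Fin n) × Fin (n + 1) => insertMax p.1 p.2 := by
  refine (Fintype.bijective_iff_injective_and_card _).2 ⟨?_, by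
    simp [Fintype.card_perm, Nat.factorial_succ, mul_comm]⟩
  rintro ⟨ρ, j⟩ ⟨ρ', j'⟩ h
  simp only at h
  obtain rfl : j = j' := by
    by_contra hne
    obtain ⟨k, rfl⟩ := Fin.exists_succAbove_eq (Ne.symm hne)
    have := insertMax_apply_self ρ' (j.succAbove k)
    rw [← h, insertMax_apply_succAbove] at this
    exact (Fin.castSucc_lt_last (ρ k)).ne this
  obtain rfl : ρ = ρ' := Equiv.ext fun k => Fin.castSucc_injective n <| by
    rw [← insertMax_apply_succAbove, h, insertMax_apply_succAbove]
  rfl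

theorem wordOf_insertMax (ρ : Equiv.Perm (Fin n)) (j : Fin (n + 1)) (i : ℕ) :
    wordOf (n + 1) (insertMax ρ j) i =
      if i = j + 1 then n + 1 else if i ≤ j then wordOf n ρ i else wordOf n ρ (i - 1) := by
  by_cases hi : 1 ≤ i ∧ i ≤ n + 1
  · obtain ⟨p, rfl⟩ : ∃ p : Fin (n + 1), i = p + 1 :=
      ⟨⟨i - 1, by omega⟩, (Nat.sub_add_cancel hi.1).symm⟩
    rw [wordOf_val_add_one]
    rcases eq_or_ne p j with rfl | hp
    · simp [insertMax_apply_self]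
    obtain ⟨k, rfl⟩ := Fin.exists_succAbove_eq hp
    rw [insertMax_apply_succAbove, Fin.val_castSucc]
    rcases lt_or_ge k.castSucc j with hk | hk
    · rw [Fin.succAbove_of_castSucc_lt _ _ hk, Fin.val_castSucc]
      rw [Fin.lt_def, Fin.val_castSucc] at hk
      rw [if_neg (by omega), if_pos (by omega), wordOf_val_add_one]
    · rw [Fin.succAbove_of_le_castSucc _ _ hk, Fin.val_succ]
      rw [Fin.le_def, Fin.val_castSucc] at hk
      rw [if_neg (by omega), if_neg (by omega), Nat.add_sub_cancel, wordOf_val_add_one]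
  · rw [wordOf, dif_neg hi]
    rcases Nat.eq_zero_or_pos i with rfl | hpos
    · rw [if_neg (by omega), if_pos (Nat.zero_le _), wordOf_zero]
    · rw [if_neg (by omega), if_neg (by omega), wordOf_of_lt ρ (by omega)]

theorem statMonomial_insertMax (ρ : Equiv.Perm (Fin n)) (j : Fin (n + 1)) :
    statMonomial (n + 1) (insertMax ρ j) =
      letterWeight (wordOf n ρ j) (n + 1) (wordOf n ρ (j + 1)) *
        ∏ k : Fin n, letterWeight (if (k : ℕ) = j then n + 1 else wordOf n ρ k)
          (wordOf n ρ (k + 1)) (if (k : ℕ) + 1 = j then n + 1 else wordOf n ρ (k + 2)) := by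
  rw [statMonomial_eq_prod, Fin.prod_univ_succAbove _ j]
  refine congrArg₂ (· * ·) (by simp [wordOf_insertMax]) (prod_congr rfl fun k _ => ?_)
  rcases lt_or_ge k.castSucc j with hk | hk
  · rw [Fin.succAbove_of_castSucc_lt _ _ hk]
    rw [Fin.lt_def, Fin.val_castSucc] at hk
    simp only [wordOf_insertMax, Fin.val_castSucc]
    congr 1 <;> split_ifs <;> first | rfl | omega
  · rw [Fin.succAbove_of_le_castSucc _ _ hk]
    rw [Fin.le_def, Fin.val_castSucc] at hk
    simp only [wordOf_insertMax, Fin.val_succ]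
    congr 1 <;> split_ifs <;> first | rfl | omega

theorem prod_letterWeight_insertMax_of_lt (ρ : Equiv.Perm (Fin n)) (i : Fin n)
    (h : wordOf n ρ i < wordOf n ρ (i + 1)) :
    ∏ k : Fin n, letterWeight (if (k : ℕ) = i then n + 1 else wordOf n ρ k)
        (wordOf n ρ (k + 1)) (if (k : ℕ) + 1 = i then n + 1 else wordOf n ρ (k + 2)) =
      letterWeight (n + 1) (wordOf n ρ (i + 1)) (wordOf n ρ (i + 2)) *
        ∏ k ∈ univ.erase i,
          letterWeight (wordOf n ρ k) (wordOf n ρ (k + 1)) (wordOf n ρ (k + 2)) := by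
  rw [← mul_prod_erase univ _ (mem_univ i)]
  refine congrArg₂ (· * ·) (by simp) (prod_congr rfl fun k hk => ?_)
  have hki : (k : ℕ) ≠ i := Fin.val_ne_of_ne (ne_of_mem_erase hk)
  simp only [if_neg hki]
  split_ifs with hk1
  · exact letterWeight_congr_right (Nat.lt_succ_of_le (wordOf_le ρ _)) (by
      rwa [show (k : ℕ) + 2 = i + 1 by omega, hk1])
  · rfl

theorem prod_letterWeight_insertMax_of_gt (ρ : Equiv.Perm (Fin n)) (i : Fin n)
    (h : wordOf n ρ (i + 2) < wordOf n ρ (i + 1)) :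
    ∏ k : Fin n, letterWeight (if (k : ℕ) = i + 1 then n + 1 else wordOf n ρ k)
        (wordOf n ρ (k + 1)) (if (k : ℕ) + 1 = i + 1 then n + 1 else wordOf n ρ (k + 2)) =
      letterWeight (wordOf n ρ i) (wordOf n ρ (i + 1)) (n + 1) *
        ∏ k ∈ univ.erase i,
          letterWeight (wordOf n ρ k) (wordOf n ρ (k + 1)) (wordOf n ρ (k + 2)) := by
  rw [← mul_prod_erase univ _ (mem_univ i)]
  refine congrArg₂ (· * ·) (by simp) (prod_congr rfl fun k hk => ?_)
  have hki : (k : ℕ) + 1 ≠ i + 1 := by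
    simpa using Fin.val_ne_of_ne (ne_of_mem_erase hk)
  simp only [if_neg hki]
  split_ifs with hk1
  · exact letterWeight_congr_left (Nat.lt_succ_of_le (wordOf_le ρ _)) (by
      rw [hk1]; exact h)
  · rfl

theorem sum_statMonomial_insertMax (hn : 0 < n) (ρ : Equiv.Perm (Fin n)) :
    ∑ j, statMonomial (n + 1) (insertMax ρ j) = insertionDerivation (statMonomial n ρ) := by
  have hN : ∀ i, wordOf n ρ i < n + 1 := fun i => Nat.lt_succ_of_le (wordOf_le ρ i)
  have hgap : ∀ j : Fin (n + 1), letterWeight (wordOf n ρ j) (n + 1) (wordOf n ρ (j + 1)) =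
      (if wordOf n ρ j < wordOf n ρ (j + 1) then X 2 else 0) +
        (if wordOf n ρ (j + 1) < wordOf n ρ j then X 3 else 0) := by
    intro j
    have := wordOf_ne_wordOf_succ hn ρ j.is_le
    rw [letterWeight_peak (hN _) (hN _)]
    split_ifs <;> first | omega | simp
  have hlast : ¬ wordOf n ρ n < wordOf n ρ (n + 1) := by
    simp [wordOf_of_lt ρ n.lt_succ_self]
  have hzero : ¬ wordOf n ρ (0 + 1) < wordOf n ρ 0 := by simp [wordOf_zero]
  simp only [statMonomial_insertMax, hgap, add_mul, ite_mul, zero_mul, sum_add_distrib]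
  -- index ascent gaps by the letter after them and descent gaps by the letter before them
  rw [Fin.sum_univ_castSucc, Fin.sum_univ_succ]
  simp only [Fin.val_last, Fin.val_zero, if_neg hlast, if_neg hzero, add_zero, zero_add]
  rw [statMonomial_eq_prod, Derivation.leibniz_prod, ← sum_add_distrib]
  refine sum_congr rfl fun i _ => ?_
  have hab := wordOf_ne_wordOf_succ hn ρ i.is_lt.le
  have hcb : wordOf n ρ (i + 2) ≠ wordOf n ρ (i + 1) :=
    (wordOf_ne_wordOf_succ hn ρ i.is_lt).symm
  rw [insertionDerivation_letterWeight hab hcb (hN _), smul_eq_mul, mul_add]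
  simp only [Fin.val_castSucc, Fin.val_succ, add_assoc, Nat.reduceAdd]
  congr 1 <;> split_ifs with h
  · rw [prod_letterWeight_insertMax_of_lt ρ i h]; ring
  · simp
  · rw [prod_letterWeight_insertMax_of_gt ρ i h]; ring
  · simp

end PermWord

section

open PowerSeries PermWord

theorem Apoly_succ {n : ℕ} (hn : 0 < n) : Apoly (n + 1) = insertionDerivation (Apoly n) := by
  change ∑ π, statMonomial (n + 1) π = insertionDerivation (∑ ρ, statMonomial n ρ)
  rw [← Fintype.sum_bijective _ insertMax_bijective
    (fun p => statMonomial (n + 1) (insertMax p.1 p.2)) _ fun _ => rfl,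
    Fintype.sum_prod_type, map_sum]
  exact Finset.sum_congr rfl fun ρ _ => sum_statMonomial_insertMax hn ρ

theorem Apoly_one : Apoly 1 = MvPolynomial.X 2 := by
  change ∑ π, statMonomial 1 π = MvPolynomial.X 2
  simp [statMonomial_eq_prod, wordOf, letterWeight]

theorem constantCoeff_Aser : constantCoeff Aser = 0 := by
  simp [Aser, ← coeff_zero_eq_constantCoeff_apply]

theorem derivative_Aser :
    d⁄dX _ Aser = insertionDerivation.mapPowerSeries Aser + C (MvPolynomial.X 2) := by
  refine PowerSeries.ext fun n => ?_
  rw [coeff_derivative, map_add, Derivation.coeff_mapPowerSeries, coeff_C]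
  simp only [Aser, coeff_mk]
  rcases n with _ | m
  · simp [Apoly_one]
  rw [if_neg m.succ_ne_zero, if_neg (m + 1).succ_ne_zero, if_neg m.succ_ne_zero, add_zero,
    Apoly_succ m.succ_pos, Derivation.map_smul, ← Nat.cast_succ, mul_comm, ← nsmul_eq_mul,
    ← Nat.cast_smul_eq_nsmul ℚ, smul_smul]
  congr 1
  rw [Nat.factorial_succ (m + 1)]
  have : ((m + 1).factorial : ℚ) ≠ 0 := by positivity
  push_cast
  field_simp

end

/-- **Theorem (Riccati equation for `A(t)`).**
`A' = A² + ((z₂ - z₁)t + x + y)·A + (z₂ - z₁)·y·t + z₁`. -/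
theorem Aser_riccati :
    PowerSeries.derivative (MvPolynomial (Fin 4) ℚ) Aser
      = Aser ^ 2
        + (PowerSeries.C (R := MvPolynomial (Fin 4) ℚ) (MvPolynomial.X 3 - MvPolynomial.X 2) *
              PowerSeries.X
            + PowerSeries.C (R := MvPolynomial (Fin 4) ℚ) (MvPolynomial.X 0 + MvPolynomial.X 1)) *
          Aser
        + PowerSeries.C (R := MvPolynomial (Fin 4) ℚ)
            ((MvPolynomial.X 3 - MvPolynomial.X 2) * MvPolynomial.X 1) * PowerSeries.X
        + PowerSeries.C (R := MvPolynomial (Fin 4) ℚ) (MvPolynomial.X 2) := by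
  have hA : PermWord.insertionDerivation.mapPowerSeries Aser =
      PowerSeries.derivative _ Aser - PowerSeries.C (MvPolynomial.X 2) := by
    rw [derivative_Aser, add_sub_cancel_right]
  rw [← sub_eq_zero]
  refine PermWord.insertionDerivation.eq_zero_of_derivative_eq_mapPowerSeries ?_ ?_
  · simp only [map_sub, map_add, map_mul, Derivation.leibniz, Derivation.leibniz_pow,
      smul_eq_mul, nsmul_eq_mul, Derivation.mapPowerSeries_C, Derivation.mapPowerSeries_X,
      Derivation.mapPowerSeries_derivative, hA, PowerSeries.derivative_C,
      PowerSeries.derivative_X, PermWord.insertionDerivation_X, Matrix.cons_val,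
      Matrix.cons_val_zero, Matrix.cons_val_one]
    ring
  · simp [derivative_Aser, constantCoeff_Aser]
end
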